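/- A linear map E on M_n(ℂ) is completely positive if and only if its Choi matrix J(E) is positive semidefinite. -/

import Mathlib

open scoped Matrix ComplexOrder

/-- The extension `E ⊗ id_k` of a linear map on `n × n` matrices to
`(n·k) × (n·k)` matrices, acting blockwise. -/
noncomputable def matExt {n : ℕ} (k : ℕ)
    (E : Matrix (Fin n) (Fin n) ℂ →ₗ[ℂ] Matrix (Fin n) (Fin n) ℂ) :
    Matrix (Fin n × Fin k) (Fin n × Fin k) ℂ →
      Matrix (Fin n × Fin k) (Fin n × Fin k) ℂ :=
  fun A p q => E (fun i j => A (i, p.2) (j, q.2)) p.1 q.1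

/-- Complete positivity: all extensions `E ⊗ id_k` preserve positive
semidefiniteness. -/
def IsCompletelyPositive {n : ℕ}
    (E : Matrix (Fin n) (Fin n) ℂ →ₗ[ℂ] Matrix (Fin n) (Fin n) ℂ) : Prop :=
  ∀ (k : ℕ) (A : Matrix (Fin n × Fin k) (Fin n × Fin k) ℂ),
    A.PosSemidef → (matExt k E A).PosSemidef

/-- Trace preservation. -/
def IsTracePreserving {n : ℕ}
    (E : Matrix (Fin n) (Fin n) ℂ →ₗ[ℂ] Matrix (Fin n) (Fin n) ℂ) : Prop :=
  ∀ A : Matrix (Fin n) (Fin n) ℂ, (E A).trace = A.trace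

/-- A quantum channel: completely positive and trace-preserving. -/
def IsCPTP {n : ℕ}
    (E : Matrix (Fin n) (Fin n) ℂ →ₗ[ℂ] Matrix (Fin n) (Fin n) ℂ) : Prop :=
  IsCompletelyPositive E ∧ IsTracePreserving E
/-- The Choi matrix `J(E) = ∑ i j, E(E_{ij}) ⊗ E_{ij}
  = (E ⊗ id)(|Φ⟩⟨Φ|)` of a linear map on `n × n` matrices,
where `|Φ⟩ = ∑ i, |i⟩ ⊗ |i⟩` is the unnormalized maximally entangled
vector and `E_{ij}` are the matrix units. -/
noncomputable def choi {n : ℕ}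
    (E : Matrix (Fin n) (Fin n) ℂ →ₗ[ℂ] Matrix (Fin n) (Fin n) ℂ) :
    Matrix (Fin n × Fin n) (Fin n × Fin n) ℂ :=
  fun p q => E (Matrix.single p.2 q.2 1) p.1 q.1

/-! `J(E) = (E ⊗ id_n)(|Φ⟩⟨Φ|)` for the maximally entangled vector `Φ`, so complete positivity
gives `J(E) ≥ 0`. Conversely, write `J(E) = ∑ᵣ vᵣ vᵣᴴ`; reshaping each `vᵣ` into a matrix `Kᵣ`
gives the Kraus form `E(X) = ∑ᵣ Kᵣ X Kᵣᴴ`, under which `E ⊗ id_k` becomes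
`A ↦ ∑ᵣ (Kᵣ ⊗ 1) A (Kᵣ ⊗ 1)ᴴ`, visibly positive. -/

open Matrix Kronecker

theorem Matrix.kronecker_one_mul_mul_conjTranspose_apply {R l m k : Type*} [CommSemiring R]
    [StarRing R] [Fintype m] [Fintype k] [DecidableEq k] (K : Matrix l m R)
    (A : Matrix (m × k) (m × k) R) (p q : l × k) :
    (K ⊗ₖ (1 : Matrix k k R) * A * (K ⊗ₖ (1 : Matrix k k R))ᴴ) p q
      = (K * of (fun i j => A (i, p.2) (j, q.2)) * Kᴴ) p.1 q.1 := by
  simp [mul_apply, Fintype.sum_prod_type, one_apply, Finset.sum_mul, apply_ite, eq_comm]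

def maxEntangled (n : ℕ) : Fin n × Fin n → ℂ := fun p => if p.1 = p.2 then 1 else 0

section

variable {n : ℕ} (E : Matrix (Fin n) (Fin n) ℂ →ₗ[ℂ] Matrix (Fin n) (Fin n) ℂ)

theorem choi_eq_matExt_maxEntangled :
    choi E = matExt n E (vecMulVec (maxEntangled n) (star (maxEntangled n))) := by
  ext p q
  have hblock : single p.2 q.2 (1 : ℂ)
      = of fun i j => vecMulVec (maxEntangled n) (star (maxEntangled n)) (i, p.2) (j, q.2) := by
    ext i j
    by_cases hi : i = p.2 <;> simp [maxEntangled, vecMulVec_apply, single_apply, hi, eq_comm]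
  exact congrArg (fun X => E X p.1 q.1) hblock

theorem apply_eq_sum_choi (X : Matrix (Fin n) (Fin n) ℂ) (a b : Fin n) :
    E X a b = ∑ i, ∑ j, X i j * choi E (a, i) (b, j) := by
  have hsingle : ∀ i j, single i j (X i j) = X i j • single i j 1 := by simp [smul_single]
  conv_lhs => rw [matrix_eq_sum_single X]
  simp only [hsingle, map_sum, map_smul, Matrix.sum_apply, Matrix.smul_apply, smul_eq_mul, choi]

theorem eq_sum_conj_of_choi_eq_sum_vecMulVec {m : ℕ} (v : Fin m → Fin n × Fin n → ℂ)
    (hv : choi E = ∑ r, vecMulVec (v r) (star (v r))) (X : Matrix (Fin n) (Fin n) ℂ) :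
    E X = ∑ r, of (Function.curry (v r)) * X * (of (Function.curry (v r)))ᴴ := by
  ext a b
  simp only [apply_eq_sum_choi, hv, Matrix.sum_apply, vecMulVec_apply, mul_apply, Finset.mul_sum,
    Finset.sum_mul, of_apply, Function.curry_apply, conjTranspose_apply, Pi.star_apply]
  rw [Finset.sum_comm]
  simp_rw [Finset.sum_comm (γ := Fin m)]
  exact Fintype.sum_congr _ _ fun j => Fintype.sum_congr _ _ fun i =>
    Fintype.sum_congr _ _ fun r => by ring

theorem matExt_eq_sum_of_eq_sum_conj {ι : Type*} [Fintype ι] (k : ℕ)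
    (K : ι → Matrix (Fin n) (Fin n) ℂ) (hE : ∀ X, E X = ∑ r, K r * X * (K r)ᴴ)
    (A : Matrix (Fin n × Fin k) (Fin n × Fin k) ℂ) :
    matExt k E A = ∑ r, K r ⊗ₖ (1 : Matrix (Fin k) (Fin k) ℂ) * A * (K r ⊗ₖ 1)ᴴ := by
  ext p q
  change E (of fun i j => A (i, p.2) (j, q.2)) p.1 q.1 = _
  simp only [hE, Matrix.sum_apply, kronecker_one_mul_mul_conjTranspose_apply]

theorem isCompletelyPositive_of_eq_sum_conj {ι : Type*} [Fintype ι]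
    (K : ι → Matrix (Fin n) (Fin n) ℂ) (hE : ∀ X, E X = ∑ r, K r * X * (K r)ᴴ) :
    IsCompletelyPositive E := fun k A hA => by
  rw [matExt_eq_sum_of_eq_sum_conj E k K hE]
  exact posSemidef_sum _ fun r _ => hA.mul_mul_conjTranspose_same _

end

/-- **Choi's theorem.**  A linear map on `M_n(ℂ)` is completely positive if
and only if its Choi matrix is positive semidefinite. -/
theorem choi_theorem {n : ℕ}
    (E : Matrix (Fin n) (Fin n) ℂ →ₗ[ℂ] Matrix (Fin n) (Fin n) ℂ) :
    IsCompletelyPositive E ↔ (choi E).PosSemidef := by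
  refine ⟨fun hE => ?_, fun hJ => ?_⟩
  · rw [choi_eq_matExt_maxEntangled]
    exact hE n _ (posSemidef_vecMulVec_self_star _)
  · obtain ⟨m, v, hv⟩ := posSemidef_iff_eq_sum_vecMulVec.mp hJ
    exact isCompletelyPositive_of_eq_sum_conj E _ (eq_sum_conj_of_choi_eq_sum_vecMulVec E v hv)
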